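/- arXiv:1907.00192 — 14 statements merged into one kernel-verified Lean document; each statement's English description precedes it below -/
import Mathlib

section
/- Let d ≥ 1, let q = (q_1,…,q_d) ∈ ℤ^d with gcd(q_1,…,q_d) = 1, let α_1,…,α_d ∈ ℤ satisfy α_1 q_1 + ⋯ + α_d q_d = 1, and let i = (i_1,…,i_d) ∈ ℤ^d with i ∉ ℤq. Then for all ℓ ∈ ℤ, gcd(ℓq_1 + i_1, …, ℓq_d + i_d) = gcd(ℓ + α_1 i_1 + ⋯ + α_d i_d, G), where G = gcd over all pairs j,k ∈ {1,…,d} of the values i_j q_k − i_k q_j. -/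
/-!
Since `∑ α_j q_j = 1`, pairing the vector `ℓ q + i` with `α` gives `ℓ + α · i`, and its
`2 × 2` minors against `q` are those of `i`; conversely
`ℓ q_j + i_j = (ℓ + α · i) q_j - ∑_k α_k (i_k q_j - i_j q_k)`.
So both sides of the identity have the same common divisors.
-/

section

variable {R ι : Type*} [CommRing R] [Fintype ι] {q i α : ι → R}

theorem sum_mul_mul_add_eq (hα : ∑ j, α j * q j = 1) (ℓ : R) :
    ∑ j, α j * (ℓ * q j + i j) = ℓ + ∑ j, α j * i j := by
  simp only [mul_add, Finset.sum_add_distrib, mul_left_comm _ ℓ, ← Finset.mul_sum, hα, mul_one]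

theorem mul_add_eq_sub_sum_mul_minor (hα : ∑ j, α j * q j = 1) (ℓ : R) (j : ι) :
    ℓ * q j + i j = (ℓ + ∑ k, α k * i k) * q j - ∑ k, α k * (i k * q j - i j * q k) := by
  have hsum : ∑ k, α k * (i k * q j - i j * q k) = (∑ k, α k * i k) * q j - i j := by
    simp only [mul_sub, Finset.sum_sub_distrib, Finset.sum_mul, mul_left_comm _ (i j),
      ← Finset.mul_sum, hα, mul_one, mul_assoc]
  rw [hsum]
  ring

theorem forall_dvd_mul_add_iff (hα : ∑ j, α j * q j = 1) (ℓ a : R) :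
    (∀ j, a ∣ ℓ * q j + i j) ↔
      a ∣ ℓ + ∑ j, α j * i j ∧ ∀ j k, a ∣ i j * q k - i k * q j := by
  constructor
  · intro h
    refine ⟨sum_mul_mul_add_eq (i := i) hα ℓ ▸ Finset.dvd_sum fun j _ => (h j).mul_left _,
      fun j k => ?_⟩
    have hminor : i j * q k - i k * q j = (ℓ * q j + i j) * q k - (ℓ * q k + i k) * q j := by
      ring
    exact hminor ▸ dvd_sub ((h j).mul_right _) ((h k).mul_right _)
  · rintro ⟨hpair, hminor⟩ j
    rw [mul_add_eq_sub_sum_mul_minor hα ℓ j]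
    exact dvd_sub (hpair.mul_right _) (Finset.dvd_sum fun k _ => (hminor k j).mul_left _)

theorem gcd_mul_add_eq_gcd_minors [IsDomain R] [NormalizedGCDMonoid R]
    (hα : ∑ j, α j * q j = 1) (ℓ : R) :
    Finset.univ.gcd (fun j => ℓ * q j + i j) =
      gcd (ℓ + ∑ j, α j * i j)
        (Finset.univ.gcd (fun jk : ι × ι => i jk.1 * q jk.2 - i jk.2 * q jk.1)) := by
  have hdvd (a : R) : (a ∣ Finset.univ.gcd fun j => ℓ * q j + i j) ↔
      a ∣ gcd (ℓ + ∑ j, α j * i j)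
        (Finset.univ.gcd (fun jk : ι × ι => i jk.1 * q jk.2 - i jk.2 * q jk.1)) := by
    simp only [Finset.dvd_gcd_iff, dvd_gcd_iff, Finset.mem_univ, forall_true_left,
      Prod.forall, forall_dvd_mul_add_iff hα]
  exact dvd_antisymm_of_normalize_eq Finset.normalize_gcd (normalize_gcd _ _)
    ((hdvd _).1 dvd_rfl) ((hdvd _).2 dvd_rfl)

end

theorem stmt_0_general {d : ℕ} (q i α : Fin d → ℤ)
    (hα : ∑ j, α j * q j = 1) :
    ∀ ℓ : ℤ,
      Finset.univ.gcd (fun j => ℓ * q j + i j) =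
        gcd (ℓ + ∑ j, α j * i j)
          (Finset.univ.gcd
            (fun jk : Fin d × Fin d => i jk.1 * q jk.2 - i jk.2 * q jk.1)) :=
  gcd_mul_add_eq_gcd_minors hα

theorem stmt_0 {d : ℕ} (hd : 1 ≤ d) (q i α : Fin d → ℤ)
    (hq : Finset.univ.gcd q = 1)
    (hα : ∑ j, α j * q j = 1)
    (hi : ¬ ∃ c : ℤ, ∀ j, i j = c * q j) :
    ∀ ℓ : ℤ,
      Finset.univ.gcd (fun j => ℓ * q j + i j) =
        gcd (ℓ + ∑ j, α j * i j)
          (Finset.univ.gcd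
            (fun jk : Fin d × Fin d => i jk.1 * q jk.2 - i jk.2 * q jk.1)) :=
  stmt_0_general q i α hα
end

section
/- Let d ≥ 1, q ∈ ℤ^d with coprime coordinates, and i ∈ ℤ^d with i ∉ ℤq. Then the sequence ℓ ↦ gcd(ℓq + i) (componentwise gcd of the vector ℓq + i) is periodic in ℓ with period G = gcd(i_j q_k − i_k q_j : j,k ∈ {1,…,d}). -/
/-!
Every common divisor `g` of the coordinates of `ℓ q + i` divides each minor
`(ℓ q_j + i_j) q_k - (ℓ q_k + i_k) q_j = i_j q_k - i_k q_j`, hence divides `G`. So adding `± G q`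
to `ℓ q + i` keeps the coordinates divisible by `g`, and the gcds at `ℓ` and `ℓ + G` divide
each other.
-/

namespace Finset

variable {ι α : Type*} [Fintype ι] [CommRing α] [NormalizedGCDMonoid α]

def minorGcd (v q : ι → α) : α :=
  univ.gcd fun jk : ι × ι => v jk.1 * q jk.2 - v jk.2 * q jk.1

theorem gcd_dvd_minorGcd (v q : ι → α) : univ.gcd v ∣ minorGcd v q :=
  dvd_gcd fun jk _ =>
    dvd_sub ((gcd_dvd (mem_univ jk.1)).mul_right _) ((gcd_dvd (mem_univ jk.2)).mul_right _)

theorem minorGcd_smul_add (c : α) (v q : ι → α) :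
    minorGcd (fun j => c * q j + v j) q = minorGcd v q := by
  unfold minorGcd
  congr 1
  funext jk
  ring

theorem dvd_gcd_smul_add {c : α} {v : ι → α} (q : ι → α) (hc : univ.gcd v ∣ c) :
    univ.gcd v ∣ univ.gcd fun j => c * q j + v j :=
  dvd_gcd fun j _ => dvd_add (hc.mul_right _) (gcd_dvd (mem_univ j))

theorem gcd_smul_add_eq {c : α} {v : ι → α} (q : ι → α) (hv : univ.gcd v ∣ c)
    (hw : (univ.gcd fun j => c * q j + v j) ∣ c) :
    (univ.gcd fun j => c * q j + v j) = univ.gcd v := by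
  refine dvd_antisymm_of_normalize_eq normalize_gcd normalize_gcd ?_ (dvd_gcd_smul_add q hv)
  have hback : v = fun j => -c * q j + (c * q j + v j) := by
    funext j; ring
  conv_rhs => rw [hback]
  exact dvd_gcd_smul_add q (dvd_neg.mpr hw)

end Finset

open Finset in
theorem stmt_1_general {d : ℕ} (q i : Fin d → ℤ) :
    ∀ ℓ : ℤ,
      Finset.univ.gcd
          (fun j =>
            (ℓ + Finset.univ.gcd
                (fun jk : Fin d × Fin d => i jk.1 * q jk.2 - i jk.2 * q jk.1)) * q j + i j) =
        Finset.univ.gcd (fun j => ℓ * q j + i j) := by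
  intro ℓ
  change univ.gcd (fun j => (ℓ + minorGcd i q) * q j + i j) = _
  set G := minorGcd i q
  set v : Fin d → ℤ := fun j => ℓ * q j + i j
  have hshift : (fun j => (ℓ + G) * q j + i j) = fun j => G * q j + v j := by
    funext j; ring
  rw [hshift]
  apply gcd_smul_add_eq q
  · simpa only [v, minorGcd_smul_add] using gcd_dvd_minorGcd v q
  · simpa only [v, minorGcd_smul_add] using gcd_dvd_minorGcd (fun j => G * q j + v j) q

theorem stmt_1 {d : ℕ} (hd : 1 ≤ d) (q i : Fin d → ℤ)
    (hq : Finset.univ.gcd q = 1)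
    (hi : ¬ ∃ c : ℤ, ∀ j, i j = c * q j) :
    ∀ ℓ : ℤ,
      Finset.univ.gcd
          (fun j =>
            (ℓ + Finset.univ.gcd
                (fun jk : Fin d × Fin d => i jk.1 * q jk.2 - i jk.2 * q jk.1)) * q j + i j) =
        Finset.univ.gcd (fun j => ℓ * q j + i j) :=
  stmt_1_general q i
end

section
/- For the Thue–Morse sequence t : ℕ → {0,1} (where t_n is the parity of the sum of binary digits of n), for every ℓ ∈ ℕ and d = 2^ℓ − 1, we have t_d = t_{2d} = t_{3d} = ⋯ = t_{2^ℓ d}; moreover this common value is 1 if ℓ is odd and 0 if ℓ is even. -/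
/-- The Thue–Morse sequence: parity of the binary digit sum. -/
def thueMorse (n : ℕ) : ℕ := (Nat.digits 2 n).sum % 2

/-!
Write `d = b ^ ℓ - 1` and `1 ≤ m ≤ b ^ ℓ`. Then `m * d = (d - (m - 1)) + b ^ ℓ * (m - 1)`,
so the base-`b` expansion of `m * d` is that of `m - 1` placed above its own digit-wise
complement in `ℓ` digits. Hence the digit sum of `m * d` is `ℓ * (b - 1)` for every such `m`;
for `b = 2` its parity is that of `ℓ`.
-/

namespace Nat

variable {b : ℕ}

theorem digits_sum_add_base_mul (hb : 1 < b) {r : ℕ} (hr : r < b) (n : ℕ) :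
    (b.digits (r + b * n)).sum = r + (b.digits n).sum := by
  rcases eq_or_ne r 0 with rfl | hr0
  · rcases eq_or_ne n 0 with rfl | hn0
    · simp
    · rw [digits_add b hb 0 n (by omega) (Or.inr hn0)]
      simp
  · rw [digits_add b hb r n hr (Or.inl hr0), List.sum_cons]

theorem digits_sum_add_pow_mul (hb : 1 < b) (ℓ a : ℕ) {c : ℕ} (hc : c < b ^ ℓ) :
    (b.digits (c + b ^ ℓ * a)).sum = (b.digits c).sum + (b.digits a).sum := by
  induction ℓ generalizing c with
  | zero => simp_all
  | succ ℓ ih =>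
    have hcb : c / b < b ^ ℓ := Nat.div_lt_of_lt_mul (by rwa [← pow_succ'])
    have hsplit : c + b ^ (ℓ + 1) * a = c % b + b * (c / b + b ^ ℓ * a) := by
      conv_lhs => rw [← mod_add_div c b]
      ring
    have hc' := digits_sum_add_base_mul hb (mod_lt c (by omega)) (c / b)
    rw [mod_add_div] at hc'
    rw [hsplit, digits_sum_add_base_mul hb (mod_lt c (by omega)), ih hcb, hc']
    ring

/-- The digits of `b ^ ℓ - 1 - a` are the complements `b - 1 - aᵢ` of the `ℓ` digits of `a`. -/
theorem digits_sum_pow_sub_one_sub_add (hb : 1 < b) (ℓ : ℕ) {a : ℕ} (ha : a < b ^ ℓ) :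
    (b.digits (b ^ ℓ - 1 - a)).sum + (b.digits a).sum = ℓ * (b - 1) := by
  induction ℓ generalizing a with
  | zero => simp_all
  | succ ℓ ih =>
    have hab : a / b < b ^ ℓ := Nat.div_lt_of_lt_mul (by rwa [← pow_succ'])
    have hr : a % b < b := mod_lt a (by omega)
    have hsplit : b ^ (ℓ + 1) - 1 - a = (b - 1 - a % b) + b * (b ^ ℓ - 1 - a / b) := by
      obtain ⟨t, ht⟩ := Nat.exists_eq_add_of_lt hab
      have hexp : b * (a / b + t + 1) = b * (a / b) + b * t + b := by ring
      have ha' := mod_add_div a b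
      rw [pow_succ', ht, hexp, show a / b + t + 1 - 1 - a / b = t by omega]
      omega
    have ha := digits_sum_add_base_mul hb hr (a / b)
    rw [mod_add_div] at ha
    rw [hsplit, digits_sum_add_base_mul hb (by omega), ha, add_one_mul, ← ih hab]
    omega

theorem digits_sum_mul_pow_sub_one (hb : 1 < b) (ℓ : ℕ) {m : ℕ} (hm₀ : 1 ≤ m)
    (hm : m ≤ b ^ ℓ) : (b.digits (m * (b ^ ℓ - 1))).sum = ℓ * (b - 1) := by
  have hsplit : m * (b ^ ℓ - 1) = (b ^ ℓ - 1 - (m - 1)) + b ^ ℓ * (m - 1) := by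
    obtain ⟨t, ht⟩ := Nat.exists_eq_add_of_le hm
    have hexp : m * (m + t - 1) = (m - 1) * (m + t) + t := by
      obtain ⟨k, rfl⟩ : ∃ k, m = k + 1 := ⟨m - 1, by omega⟩
      simp only [Nat.add_sub_cancel, Nat.add_right_comm k 1 t, Nat.add_sub_cancel]
      ring
    rw [ht, hexp, mul_comm]
    omega
  rw [hsplit, digits_sum_add_pow_mul hb ℓ (m - 1) (by omega),
    digits_sum_pow_sub_one_sub_add hb ℓ (by omega)]

end Nat

theorem thueMorse_mul_two_pow_sub_one (ℓ : ℕ) {m : ℕ} (hm₀ : 1 ≤ m) (hm : m ≤ 2 ^ ℓ) :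
    thueMorse (m * (2 ^ ℓ - 1)) = ℓ % 2 := by
  simp [thueMorse, Nat.digits_sum_mul_pow_sub_one one_lt_two ℓ hm₀ hm]

theorem stmt_2 (ℓ : ℕ) :
    (∀ m : ℕ, 1 ≤ m → m ≤ 2 ^ ℓ →
      thueMorse (m * (2 ^ ℓ - 1)) = thueMorse (2 ^ ℓ - 1)) ∧
    thueMorse (2 ^ ℓ - 1) = if Odd ℓ then 1 else 0 := by
  have hd : thueMorse (2 ^ ℓ - 1) = ℓ % 2 := by
    simpa using thueMorse_mul_two_pow_sub_one ℓ le_rfl Nat.one_le_two_pow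
  refine ⟨fun m hm₀ hm => ?_, ?_⟩
  · rw [hd, thueMorse_mul_two_pow_sub_one ℓ hm₀ hm]
  · rw [hd]
    split_ifs with hodd
    · exact Nat.odd_iff.mp hodd
    · exact Nat.even_iff.mp (Nat.not_odd_iff_even.mp hodd)
end

section
/- For the Thue–Morse sequence t : ℕ → {0,1} and any positive integer ℓ, setting d = 2^ℓ + 1, we have t_{md} = 0 for all m ∈ {0, 1, …, 2^ℓ}. -/
theorem Nat.sum_digits_add_base_pow_mul {b k a c : ℕ} (hb : 1 < b) (ha : a < b ^ k) :
    (Nat.digits b (a + b ^ k * c)).sum = (Nat.digits b a).sum + (Nat.digits b c).sum := by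
  rcases Nat.eq_zero_or_pos c with rfl | hc
  · simp
  have hlen : (Nat.digits b a).length ≤ k := (Nat.digits_length_le_iff hb a).2 ha
  obtain ⟨j, rfl⟩ := Nat.exists_eq_add_of_le hlen
  rw [← Nat.digits_append_zeroes_append_digits hb hc]
  simp

theorem thueMorse_add_two_pow_mul_self {k a : ℕ} (ha : a < 2 ^ k) :
    thueMorse (a + 2 ^ k * a) = 0 := by
  rw [thueMorse, Nat.sum_digits_add_base_pow_mul one_lt_two ha]
  omega

theorem stmt_3 (ℓ : ℕ) (hℓ : 0 < ℓ) (m : ℕ) (hm : m ≤ 2 ^ ℓ) :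
    thueMorse (m * (2 ^ ℓ + 1)) = 0 := by
  rcases hm.lt_or_eq with hm | rfl
  · rw [mul_add_one, mul_comm, add_comm]
    exact thueMorse_add_two_pow_mul_self hm
  · have hpos : 0 < 2 ^ ℓ := Nat.two_pow_pos ℓ
    have hone : 1 < 2 ^ ℓ := Nat.one_lt_two_pow hℓ.ne'
    have hsplit : 2 ^ ℓ * (2 ^ ℓ + 1) = 0 + 2 ^ ℓ * (1 + 2 ^ ℓ * 1) := by ring
    rw [thueMorse, hsplit, Nat.sum_digits_add_base_pow_mul one_lt_two hpos,
      Nat.sum_digits_add_base_pow_mul one_lt_two hone]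
    simp
end

section
/- If r is an odd positive integer with binary length at most ℓ, then the binary digit sum of r(2^ℓ − 1) equals ℓ. -/
lemma sum_step (n : ℕ) : (Nat.digits 2 n).sum = n % 2 + (Nat.digits 2 (n / 2)).sum := by
  rcases Nat.eq_zero_or_pos n with rfl | hn
  · simp
  · rw [Nat.digits_def' (by norm_num : 1 < 2) hn]; simp

lemma complement (ℓ : ℕ) : ∀ m, m < 2 ^ ℓ →
    (Nat.digits 2 m).sum + (Nat.digits 2 (2 ^ ℓ - 1 - m)).sum = ℓ := by
  induction ℓ with
  | zero => intro m hm; interval_cases m; simp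
  | succ ℓ ih =>
    intro m hm
    have h1 : (2 ^ (ℓ + 1) - 1 - m) % 2 = 1 - m % 2 := by
      have := Nat.mod_two_eq_zero_or_one m
      have h2 : 2 ^ (ℓ + 1) = 2 * 2 ^ ℓ := by ring
      omega
    have h2 : (2 ^ (ℓ + 1) - 1 - m) / 2 = 2 ^ ℓ - 1 - m / 2 := by
      have h2 : 2 ^ (ℓ + 1) = 2 * 2 ^ ℓ := by ring
      omega
    have h3 : m / 2 < 2 ^ ℓ := by
      have h2 : 2 ^ (ℓ + 1) = 2 * 2 ^ ℓ := by ring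
      omega
    have := ih (m / 2) h3
    rw [sum_step m, sum_step (2 ^ (ℓ + 1) - 1 - m), h1, h2]
    have := Nat.mod_two_eq_zero_or_one m
    omega

theorem stmt_4 (r ℓ : ℕ) (hodd : Odd r) (hpos : 0 < r)
    (hlen : (Nat.digits 2 r).length ≤ ℓ) :
    (Nat.digits 2 (r * (2 ^ ℓ - 1))).sum = ℓ := by
  have hrlt : r < 2 ^ ℓ :=
    lt_of_lt_of_le (Nat.lt_base_pow_length_digits (by norm_num))
      (Nat.pow_le_pow_right (by norm_num) hlen)
  rcases Nat.eq_or_lt_of_le hpos with h1 | h1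
  · -- r = 1
    have : r = 1 := h1.symm
    subst this
    have := complement ℓ 0 (Nat.pow_pos (by norm_num))
    simpa using this
  · -- r ≥ 2
    have hm : 0 < r - 1 := by omega
    have hlen2 : (Nat.digits 2 (2 ^ ℓ - r)).length ≤ ℓ := by
      rcases Nat.eq_zero_or_pos (2 ^ ℓ - r) with h0 | h0
      · simp [h0]
      · rw [Nat.digits_len 2 _ (by norm_num) (by omega)]
        have : Nat.log 2 (2 ^ ℓ - r) < ℓ := Nat.log_lt_of_lt_pow (by omega) (by omega)
        omega
    set k := ℓ - (Nat.digits 2 (2 ^ ℓ - r)).length with hk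
    have key := Nat.digits_append_zeroes_append_digits (b := 2) (k := k)
      (m := r - 1) (n := 2 ^ ℓ - r) (by norm_num) hm
    have harith : (2 ^ ℓ - r) + 2 ^ ((Nat.digits 2 (2 ^ ℓ - r)).length + k) * (r - 1)
        = r * (2 ^ ℓ - 1) := by
      have : (Nat.digits 2 (2 ^ ℓ - r)).length + k = ℓ := by omega
      rw [this]
      have h2 : 1 ≤ 2 ^ ℓ := Nat.one_le_two_pow
      zify [hrlt.le, h2, hpos]
      ring
    rw [harith] at key
    rw [← key]
    have hc := complement ℓ (r - 1) (by omega)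
    have : (2 : ℕ) ^ ℓ - 1 - (r - 1) = 2 ^ ℓ - r := by omega
    rw [this] at hc
    simp [List.sum_append]
    omega
end

section
/- Every arithmetic subsequence of a uniformly recurrent infinite word is uniformly recurrent. That is, if w : ℕ → A is uniformly recurrent and v(ℓ) = w(ℓq + p) for fixed integers q ≥ 1 and p ≥ 0, then v is uniformly recurrent. -/
/-- A unidimensional infinite word is uniformly recurrent if for every length `n`
there is a bound `b` such that every length-`b` factor contains every length-`n` factor. -/
def UniformlyRecurrent {A : Type*} (w : ℕ → A) : Prop :=
  ∀ n : ℕ, ∃ b : ℕ, ∀ p m : ℕ, ∃ k : ℕ,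
    m ≤ k ∧ k + n ≤ m + b ∧ ∀ j < n, w (k + j) = w (p + j)

/-!
The word `v ℓ = w (ℓ * q + p)` has finitely many factors of each length: each is read off with
step `q` from a factor of `w`, and all factors of `w` of a given length occur in one bounded
window. Hence `v` is uniformly recurrent as soon as each of its prefixes recurs with bounded gaps,
and this follows once each prefix of `w` recurs with bounded gaps at positions divisible by `q`.

For the latter, the residues mod `q` of the occurrences of the length-`N` prefix of `w` shrink
as `N` grows, so they stabilise to a set `R`. Composing occurrences shows that `R` is closed
under addition, hence is a subgroup of `ZMod q`. Given an occurrence at `k` of a long enough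
prefix, the stable prefix also occurs inside it at some bounded position `j ≡ -k`, i.e. at `k + j`.
-/

section

variable {A : Type*}

def PrefixOccursAt (u : ℕ → A) (N k : ℕ) : Prop := ∀ j < N, u (k + j) = u j

theorem PrefixOccursAt.mono {u : ℕ → A} {N M k : ℕ} (h : PrefixOccursAt u N k) (hMN : M ≤ N) :
    PrefixOccursAt u M k :=
  fun j hj => h j (hj.trans_le hMN)

theorem prefixOccursAt_zero (u : ℕ → A) (N : ℕ) : PrefixOccursAt u N 0 :=
  fun j _ => by rw [zero_add]

theorem PrefixOccursAt.add {u : ℕ → A} {N k₁ k₂ : ℕ} (h₁ : PrefixOccursAt u (k₂ + N) k₁)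
    (h₂ : PrefixOccursAt u N k₂) : PrefixOccursAt u N (k₁ + k₂) :=
  fun j hj => by rw [add_assoc, h₁ (k₂ + j) (by omega), h₂ j hj]

theorem exists_bound_of_finite {ι : Type*} [Finite ι] (Q : ι → ℕ → Prop) :
    ∃ C, ∀ i, (∃ j, Q i j) → ∃ j ≤ C, Q i j := by
  classical
  obtain ⟨C, hC⟩ := (Set.finite_range fun i => if h : ∃ j, Q i j then Nat.find h else 0).bddAbove
  refine ⟨C, fun i hi => ⟨Nat.find hi, ?_, Nat.find_spec hi⟩⟩
  simpa [hi] using hC ⟨i, rfl⟩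

theorem uniformlyRecurrent_of_prefixOccursAt {u : ℕ → A}
    (hfin : ∀ n, (Set.range fun k (j : Fin n) => u (k + j)).Finite)
    (hpre : ∀ N, ∃ B, ∀ m, ∃ t, m ≤ t ∧ t ≤ m + B ∧ PrefixOccursAt u N t) :
    UniformlyRecurrent u := by
  intro n
  have := (hfin n).to_subtype
  obtain ⟨S, hS⟩ := exists_bound_of_finite fun (g : Set.range fun k (j : Fin n) => u (k + j)) s =>
    (fun j : Fin n => u (s + j)) = g
  obtain ⟨B, hB⟩ := hpre (S + n)
  refine ⟨B + S + n, fun p m => ?_⟩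
  obtain ⟨s, hsS, hs⟩ := hS ⟨_, p, rfl⟩ ⟨p, rfl⟩
  obtain ⟨t, hmt, htB, ht⟩ := hB m
  refine ⟨t + s, by omega, by omega, fun j hj => ?_⟩
  rw [add_assoc, ht (s + j) (by omega)]
  exact congrFun hs ⟨j, hj⟩

namespace UniformlyRecurrent

variable {w : ℕ → A}

theorem exists_prefixOccursAt (hw : UniformlyRecurrent w) (N : ℕ) :
    ∃ b, ∀ m, ∃ k, m ≤ k ∧ k + N ≤ m + b ∧ PrefixOccursAt w N k := by
  obtain ⟨b, hb⟩ := hw N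
  refine ⟨b, fun m => ?_⟩
  obtain ⟨k, hmk, hkb, hk⟩ := hb 0 m
  exact ⟨k, hmk, hkb, fun j hj => by rw [hk j hj, zero_add]⟩

theorem finite_range_sample (hw : UniformlyRecurrent w) (n q : ℕ) :
    (Set.range fun k (j : Fin n) => w (k + j * q)).Finite := by
  obtain ⟨b, hb⟩ := hw (n * q + 1)
  refine ((Set.finite_Iic b).image fun k (j : Fin n) => w (k + j * q)).subset ?_
  rintro _ ⟨p, rfl⟩
  obtain ⟨k, -, hkb, hk⟩ := hb p 0
  refine ⟨k, by simp only [Set.mem_Iic]; omega, funext fun j => hk _ ?_⟩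
  have := Nat.mul_le_mul_right q j.isLt.le
  omega

end UniformlyRecurrent

def prefixResidues (w : ℕ → A) (q N : ℕ) : Set (ZMod q) :=
  {r | ∃ k : ℕ, (k : ZMod q) = r ∧ PrefixOccursAt w N k}

theorem prefixResidues_antitone (w : ℕ → A) (q : ℕ) : Antitone (prefixResidues w q) :=
  fun _ _ hNM _ ⟨k, hk, hocc⟩ => ⟨k, hk, hocc.mono hNM⟩

theorem exists_prefixResidues_stable (w : ℕ → A) (q : ℕ) [NeZero q] (N : ℕ) :
    ∃ N₁, N ≤ N₁ ∧ ∀ M, N₁ ≤ M → prefixResidues w q M = prefixResidues w q N₁ := by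
  obtain ⟨N₀, hN₀⟩ := WellFoundedLT.antitone_chain_condition (prefixResidues_antitone w q)
  refine ⟨max N N₀, le_max_left _ _, fun M hM => ?_⟩
  rw [← hN₀ M (by omega), ← hN₀ _ (le_max_right _ _)]

theorem neg_mem_prefixResidues {w : ℕ → A} {q : ℕ} [NeZero q] {N₁ : ℕ}
    (hstab : ∀ M, N₁ ≤ M → prefixResidues w q M = prefixResidues w q N₁)
    {r : ZMod q} (hr : r ∈ prefixResidues w q N₁) : -r ∈ prefixResidues w q N₁ := by
  let R : AddSubmonoid (ZMod q) :=
    { carrier := prefixResidues w q N₁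
      zero_mem' := ⟨0, Nat.cast_zero, prefixOccursAt_zero w N₁⟩
      add_mem' := by
        rintro a _ ha ⟨k₂, rfl, h₂⟩
        rw [← hstab (k₂ + N₁) le_add_self] at ha
        obtain ⟨k₁, rfl, h₁⟩ := ha
        exact ⟨k₁ + k₂, Nat.cast_add _ _, h₁.add h₂⟩ }
  exact AddSubmonoid.multiples_le.mpr (show r ∈ R from hr)
    (mem_multiples_iff_mem_zmultiples.mpr (neg_mem (AddSubgroup.mem_zmultiples r)))

theorem UniformlyRecurrent.exists_prefixOccursAt_dvd {w : ℕ → A} (hw : UniformlyRecurrent w)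
    (q : ℕ) [NeZero q] (N : ℕ) :
    ∃ B, ∀ m, ∃ t, m ≤ t ∧ t ≤ m + B ∧ q ∣ t ∧ PrefixOccursAt w N t := by
  obtain ⟨N₁, hN, hstab⟩ := exists_prefixResidues_stable w q N
  obtain ⟨C, hC⟩ := exists_bound_of_finite fun (r : ZMod q) j =>
    (j : ZMod q) = r ∧ PrefixOccursAt w N₁ j
  obtain ⟨b, hb⟩ := hw.exists_prefixOccursAt (N₁ + C)
  refine ⟨b, fun m => ?_⟩
  obtain ⟨k, hmk, hkb, hk⟩ := hb m
  have hkR : (k : ZMod q) ∈ prefixResidues w q N₁ := by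
    rw [← hstab (N₁ + C) le_self_add]
    exact ⟨k, rfl, hk⟩
  obtain ⟨j, hjC, hj, hjocc⟩ := hC _ (neg_mem_prefixResidues hstab hkR)
  refine ⟨k + j, by omega, by omega, ?_, ((hk.mono (by omega)).add hjocc).mono hN⟩
  rw [← ZMod.natCast_eq_zero_iff, Nat.cast_add, hj, add_neg_cancel]

end

theorem stmt_6_general {A : Type*} (w : ℕ → A) (hw : UniformlyRecurrent w)
    (q p : ℕ) (hq : 1 ≤ q) :
    UniformlyRecurrent (fun ℓ => w (ℓ * q + p)) := by
  have : NeZero q := ⟨by omega⟩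
  refine uniformlyRecurrent_of_prefixOccursAt (fun n => ?_) (fun N => ?_)
  · refine (hw.finite_range_sample n q).subset ?_
    rintro _ ⟨ℓ, rfl⟩
    exact ⟨ℓ * q + p, funext fun j => by ring_nf⟩
  · obtain ⟨B, hB⟩ := hw.exists_prefixOccursAt_dvd q (N * q + p)
    refine ⟨B, fun m => ?_⟩
    obtain ⟨_, hmt, htB, ⟨t, rfl⟩, ht⟩ := hB (m * q)
    refine ⟨t, ?_, ?_, fun j hj => ?_⟩
    · nlinarith
    · nlinarith
    · show w ((t + j) * q + p) = w (j * q + p)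
      rw [show (t + j) * q + p = q * t + (j * q + p) by ring, ht _ (by nlinarith)]

theorem stmt_6 {A : Type*} [Finite A] (w : ℕ → A) (hw : UniformlyRecurrent w)
    (q p : ℕ) (hq : 1 ≤ q) :
    UniformlyRecurrent (fun ℓ => w (ℓ * q + p)) :=
  stmt_6_general w hw q p hq
end

section
/- A d-dimensional infinite word w : ℕ^d → A is URD if and only if for all sizes s ∈ ℕ^d and all directions q ∈ ℕ^d with coprime coordinates, the unidimensional word w_{q,s} is uniformly recurrent. -/
/-- The word along direction `q` with respect to size `s` in the `d`-dimensional word `w`: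
its `ℓ`-th letter is the block of size `s` at position `ℓ • q`. -/
def dirWord {d : ℕ} {A : Type*} (w : (Fin d → ℕ) → A) (q s : Fin d → ℕ) :
    ℕ → ({i : Fin d → ℕ // ∀ j, i j < s j} → A) :=
  fun ℓ i => w (fun j => i.1 j + ℓ * q j)

/-- Uniformly recurrent along all directions. -/
def IsURD {d : ℕ} {A : Type*} (w : (Fin d → ℕ) → A) : Prop :=
  ∀ s q : Fin d → ℕ, Finset.univ.gcd q = 1 →
    ∃ b : ℕ, ∀ m : ℕ, ∃ k : ℕ, m ≤ k ∧ k < m + b ∧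
      dirWord w q s k = dirWord w q s 0

/-- Strongly uniformly recurrent along all directions: the bound depends only on the size. -/
def IsSURD {d : ℕ} {A : Type*} (w : (Fin d → ℕ) → A) : Prop :=
  ∀ s : Fin d → ℕ, ∃ b : ℕ, ∀ q : Fin d → ℕ, Finset.univ.gcd q = 1 →
    ∀ m : ℕ, ∃ k : ℕ, m ≤ k ∧ k < m + b ∧
      dirWord w q s k = dirWord w q s 0

/-- Super strongly uniformly recurrent along all directions from any origin. -/
def IsSSURDO {d : ℕ} {A : Type*} (w : (Fin d → ℕ) → A) : Prop :=
  ∀ s : Fin d → ℕ, ∃ b : ℕ, ∀ q : Fin d → ℕ, Finset.univ.gcd q = 1 →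
    ∀ p : Fin d → ℕ, ∀ m : ℕ, ∃ k : ℕ, m ≤ k ∧ k < m + b ∧
      dirWord (fun i => w (fun j => i j + p j)) q s k =
        dirWord (fun i => w (fun j => i j + p j)) q s 0

/-- Uniform recurrence for `d`-dimensional words: every prefix of size `s` occurs
in every factor of size `(b,…,b)`. -/
def IsUR {d : ℕ} {A : Type*} (w : (Fin d → ℕ) → A) : Prop :=
  ∀ s : Fin d → ℕ, ∃ b : ℕ, ∀ p : Fin d → ℕ, ∃ r : Fin d → ℕ,
    (∀ j, p j ≤ r j ∧ r j + s j ≤ p j + b) ∧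
    ∀ i : Fin d → ℕ, (∀ j, i j < s j) → w (fun j => r j + i j) = w i


/- The letter of `w_{q,s}` at position `p + j` (for `j ≤ c`) is a sub-block of the
letter of `w_{q,s+c•q}` at position `p`. Hence a return of the prefix letter of
`w_{q,s+p•q}` yields a return of the letter `w_{q,s}(p)`, and a return of the letter
`w_{q,s+n•q}(p)` yields a return of the length-`n` factor of `w_{q,s}` at `p`. Since the
alphabet of `w_{q,s}` is finite, the return bounds can be taken uniform in the letter. -/

lemma exists_uniform_return_bound {B : Type*} [Finite B] (u : ℕ → B)
    (h : ∀ p, ∃ b, ∀ m, ∃ k, m ≤ k ∧ k < m + b ∧ u k = u p) :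
    ∃ b, ∀ p m, ∃ k, m ≤ k ∧ k < m + b ∧ u k = u p := by
  choose b hb using h
  obtain ⟨C, hC⟩ := Finite.exists_le fun v : Set.range u => b v.2.choose
  refine ⟨C, fun p m => ?_⟩
  have hrep : u (⟨u p, p, rfl⟩ : Set.range u).2.choose = u p :=
    (⟨u p, p, rfl⟩ : Set.range u).2.choose_spec
  obtain ⟨k, hmk, hkb, hk⟩ := hb _ m
  exact ⟨k, hmk, hkb.trans_le (Nat.add_le_add_left (hC ⟨u p, p, rfl⟩) m), hk.trans hrep⟩

instance finite_subtype_forall_lt {d : ℕ} (s : Fin d → ℕ) : Finite {i : Fin d → ℕ // ∀ j, i j < s j} :=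
  ((Set.finite_Iic s).subset fun _ hi j => (hi j).le).to_subtype

lemma dirWord_add_eq_of_eq {d : ℕ} {A : Type*} (w : (Fin d → ℕ) → A) (q s : Fin d → ℕ)
    {c k k' j : ℕ} (hj : j ≤ c)
    (h : dirWord w q (fun t => s t + c * q t) k = dirWord w q (fun t => s t + c * q t) k') :
    dirWord w q s (k + j) = dirWord w q s (k' + j) := by
  funext i
  have hi : ∀ t, i.1 t + j * q t < s t + c * q t := fun t =>
    Nat.add_lt_add_of_lt_of_le (i.2 t) (Nat.mul_le_mul_right _ hj)
  have := congrFun h ⟨fun t => i.1 t + j * q t, hi⟩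
  simpa only [dirWord, add_mul, add_assoc, add_comm (j * _)] using this

lemma IsURD.exists_return_bound {d : ℕ} {A : Type*} {w : (Fin d → ℕ) → A} (h : IsURD w)
    (s q : Fin d → ℕ) (hq : Finset.univ.gcd q = 1) (p : ℕ) :
    ∃ b, ∀ m, ∃ k, m ≤ k ∧ k < m + b ∧ dirWord w q s k = dirWord w q s p := by
  obtain ⟨b, hb⟩ := h (fun t => s t + p * q t) q hq
  refine ⟨b + p, fun m => ?_⟩
  obtain ⟨ℓ, hmℓ, hℓb, hℓ⟩ := hb m
  refine ⟨ℓ + p, by omega, by omega, ?_⟩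
  simpa using dirWord_add_eq_of_eq w q s le_rfl hℓ

theorem stmt_7 {d : ℕ} {A : Type*} [Finite A] (w : (Fin d → ℕ) → A) :
    IsURD w ↔
      ∀ s q : Fin d → ℕ, Finset.univ.gcd q = 1 →
        UniformlyRecurrent (dirWord w q s) := by
  constructor
  · intro h s q hq n
    obtain ⟨b, hb⟩ := exists_uniform_return_bound _
      (h.exists_return_bound (fun t => s t + n * q t) q hq)
    refine ⟨b + n, fun p m => ?_⟩
    obtain ⟨k, hmk, hkb, hk⟩ := hb p m
    exact ⟨k, hmk, by omega, fun j hj => dirWord_add_eq_of_eq w q s hj.le hk⟩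
  · intro h s q hq
    obtain ⟨b, hb⟩ := h s q hq 1
    refine ⟨b, fun m => ?_⟩
    obtain ⟨k, hmk, hkb, hk⟩ := hb 0 m
    exact ⟨k, hmk, by omega, by simpa using hk 0 one_pos⟩
end

section
/- A d-dimensional infinite word w is URD if and only if it is URDO, i.e., if and only if every translate w^{(p)} : i ↦ w(i + p) (p ∈ ℕ^d) is URD. -/
theorem dirWord_translate_apply {d : ℕ} {A : Type*} (w : (Fin d → ℕ) → A) (p q s : Fin d → ℕ)
    (ℓ : ℕ) (i : {i : Fin d → ℕ // ∀ j, i j < s j}) :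
    dirWord (fun i => w (fun j => i j + p j)) q s ℓ i =
      dirWord w q (fun j => p j + s j) ℓ ⟨fun j => i.1 j + p j, fun j => by grind⟩ := by
  simp only [dirWord]
  congr 1
  funext j
  ring

theorem IsURD.translate {d : ℕ} {A : Type*} {w : (Fin d → ℕ) → A} (h : IsURD w)
    (p : Fin d → ℕ) : IsURD (fun i => w (fun j => i j + p j)) := by
  intro s q hq
  obtain ⟨b, hb⟩ := h (fun j => p j + s j) q hq
  refine ⟨b, fun m => ?_⟩
  obtain ⟨k, hmk, hkb, hk⟩ := hb m
  refine ⟨k, hmk, hkb, funext fun i => ?_⟩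
  rw [dirWord_translate_apply, dirWord_translate_apply, hk]

theorem stmt_8_general {d : ℕ} {A : Type*} (w : (Fin d → ℕ) → A) :
    IsURD w ↔ ∀ p : Fin d → ℕ, IsURD (fun i => w (fun j => i j + p j)) :=
  -- the translate by `0` is `w` up to definitional unfolding
  ⟨IsURD.translate, fun h => h 0⟩

theorem stmt_8 {d : ℕ} {A : Type*} [Finite A] (w : (Fin d → ℕ) → A) :
    IsURD w ↔ ∀ p : Fin d → ℕ, IsURD (fun i => w (fun j => i j + p j)) :=
  stmt_8_general w
end

section
/- If a bidimensional infinite word w : ℕ² → A is URD, then every row n ↦ (w(k, n))_{k∈ℕ} and every column m ↦ (w(m, k))_{k∈ℕ} of w is a uniformly recurrent unidimensional word. -/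
/-!
Along a line `ℓ ↦ w (p + ℓ • q)` of a URD word, the prefix of length `L` sits inside the box of size
`p + L • q + 1` at the origin, and the recurrence of that box along `q` makes the prefix recur with
bounded gaps. Over a finite alphabet, every factor of length `n` already occurs in some fixed prefix,
so bounded-gap recurrence of all prefixes is uniform recurrence.
-/

theorem exists_bound_forall_factor_occurs_before {A : Type*} [Finite A] (u : ℕ → A) (n : ℕ) :
    ∃ N, ∀ p, ∃ p' < N, ∀ j < n, u (p' + j) = u (p + j) := by
  set factor : ℕ → Fin n → A := fun p j => u (p + j)
  choose pos hpos using fun v : Set.range factor => v.2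
  obtain ⟨N, hN⟩ := (Set.finite_range pos).bddAbove
  refine ⟨N + 1, fun p => ⟨pos ⟨factor p, p, rfl⟩, Nat.lt_succ_of_le (hN ⟨_, rfl⟩), fun j hj => ?_⟩⟩
  exact congrFun (hpos ⟨factor p, p, rfl⟩) ⟨j, hj⟩

theorem UniformlyRecurrent.of_prefixes {A : Type*} [Finite A] (u : ℕ → A)
    (h : ∀ L, ∃ b, ∀ m, ∃ k, m ≤ k ∧ k < m + b ∧ ∀ j < L, u (k + j) = u j) :
    UniformlyRecurrent u := by
  intro n
  obtain ⟨N, hN⟩ := exists_bound_forall_factor_occurs_before u n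
  obtain ⟨b, hb⟩ := h (N + n)
  refine ⟨b + N + n, fun p m => ?_⟩
  obtain ⟨p', hp'N, hp'⟩ := hN p
  obtain ⟨k, hmk, hkm, hk⟩ := hb m
  refine ⟨k + p', by omega, by omega, fun j hj => ?_⟩
  rw [Nat.add_assoc, hk (p' + j) (by omega), hp' j hj]

theorem IsURD.exists_prefix_recurrence_line {d : ℕ} {A : Type*} {w : (Fin d → ℕ) → A}
    (hw : IsURD w) {q : Fin d → ℕ} (hq : Finset.univ.gcd q = 1) (p : Fin d → ℕ) (L : ℕ) :
    ∃ b, ∀ m, ∃ k, m ≤ k ∧ k < m + b ∧ ∀ j < L, w (p + (k + j) • q) = w (p + j • q) := by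
  obtain ⟨b, hb⟩ := hw (p + L • q + 1) q hq
  refine ⟨b, fun m => ?_⟩
  obtain ⟨k, hmk, hkm, hk⟩ := hb m
  refine ⟨k, hmk, hkm, fun j hj => ?_⟩
  have hbox : ∀ t, (p + j • q) t < (p + L • q + 1) t := fun t => by
    simp only [Pi.add_apply, Pi.smul_apply, smul_eq_mul, Pi.one_apply]
    have := Nat.mul_le_mul_right (q t) hj.le
    omega
  have hk_at := congrFun hk ⟨p + j • q, hbox⟩
  simp only [dirWord, zero_mul, add_zero] at hk_at
  convert hk_at using 2
  funext t
  simp only [Pi.add_apply, Pi.smul_apply, smul_eq_mul]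
  ring

theorem IsURD.uniformlyRecurrent_line {d : ℕ} {A : Type*} [Finite A] {w : (Fin d → ℕ) → A}
    (hw : IsURD w) {q : Fin d → ℕ} (hq : Finset.univ.gcd q = 1) (p : Fin d → ℕ) :
    UniformlyRecurrent fun ℓ => w (p + ℓ • q) :=
  UniformlyRecurrent.of_prefixes _ (hw.exists_prefix_recurrence_line hq p)

theorem stmt_10 {A : Type*} [Finite A] (w : (Fin 2 → ℕ) → A) (hw : IsURD w) :
    (∀ n : ℕ, UniformlyRecurrent (fun k => w ![k, n])) ∧
    (∀ m : ℕ, UniformlyRecurrent (fun k => w ![m, k])) := by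
  refine ⟨fun n => ?_, fun m => ?_⟩
  · convert hw.uniformlyRecurrent_line (q := ![1, 0]) (by decide) ![0, n] using 3 with k
    ext t; fin_cases t <;> simp
  · convert hw.uniformlyRecurrent_line (q := ![0, 1]) (by decide) ![m, 0] using 3 with k
    ext t; fin_cases t <;> simp
end

section
/- Let w : ℕ² → {0,1} be the bidimensional word whose rows alternate between 1F and 0F, where F is the Fibonacci word (fixed point of 0 ↦ 01, 1 ↦ 0): row n equals 1F if n is odd and 0F if n is even (rows indexed from bottom). Then all rows and all columns of w are uniformly recurrent unidimensional words, but w is not uniformly recurrent: the square prefix of size (2,2) of w occurs only within the first two columns, so w is not UR. -/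
/-- One step of the Fibonacci morphism `0 ↦ 01, 1 ↦ 0` on letters. -/
def fibStep : ℕ → List ℕ
  | 0 => [0, 1]
  | _ => [0]

/-- Iterates of the Fibonacci morphism starting from `[0]`. -/
def fibList : ℕ → List ℕ
  | 0 => [0]
  | n + 1 => (fibList n).flatMap fibStep

/-- The Fibonacci word, fixed point of `0 ↦ 01, 1 ↦ 0`. -/
def fibWord (n : ℕ) : ℕ := (fibList (n + 1)).getD n 0

/-- The bidimensional word whose row `n` is `1F` for odd `n` and `0F` for even `n`. -/
def W12 (k n : ℕ) : ℕ := if k = 0 then n % 2 else fibWord (k - 1)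



namespace Aux12

abbrev L (n : ℕ) : ℕ := (fibList n).length

lemma fibList_recur (n : ℕ) : fibList (n+2) = fibList (n+1) ++ fibList n := by
  induction n with
  | zero => decide
  | succ n ih =>
    show (fibList (n+2)).flatMap fibStep = _
    conv_lhs => rw [ih]
    rw [List.flatMap_append]
    rfl

lemma L_recur (n : ℕ) : L (n+2) = L (n+1) + L n := by
  show (fibList (n+2)).length = _
  rw [fibList_recur, List.length_append]

lemma L_ge (n : ℕ) : n + 1 ≤ L n := by
  induction n using Nat.twoStepInduction with
  | zero => decide
  | one => decide
  | more n ih1 ih2 => rw [L_recur]; omega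

lemma L_pos (n : ℕ) : 1 ≤ L n := le_trans (by omega) (L_ge n)

lemma prefix_succ (n : ℕ) : fibList n <+: fibList (n+1) := by
  cases n with
  | zero => exact ⟨[1], rfl⟩
  | succ n => exact ⟨fibList n, (fibList_recur n).symm⟩

lemma prefix_le {n m : ℕ} (h : n ≤ m) : fibList n <+: fibList m := by
  induction m with
  | zero => simp_all
  | succ m ih =>
    rcases Nat.lt_or_ge n (m+1) with h' | h'
    · exact (ih (by omega)).trans (prefix_succ m)
    · have : n = m + 1 := by omega
      subst this; exact List.prefix_refl _

lemma getD_prefix {u v : List ℕ} (h : u <+: v) {j : ℕ} (hj : j < u.length) :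
    v.getD j 0 = u.getD j 0 := by
  obtain ⟨w, rfl⟩ := h
  rw [List.getD_append _ _ _ _ hj]

lemma fibWord_eq {k M : ℕ} (h : k < L M) : fibWord k = (fibList M).getD k 0 := by
  rw [fibWord]
  rcases le_total M (k+1) with hh | hh
  · exact getD_prefix (prefix_le hh) h
  · exact (getD_prefix (prefix_le hh) (lt_of_lt_of_le (by omega) (L_ge (k+1)))).symm

lemma lastLetter (n : ℕ) : (fibList n).getD (L n - 1) 0 = n % 2 := by
  induction n using Nat.twoStepInduction with
  | zero => decide
  | one => decide
  | more n ih1 ih2 =>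
    have h1 := L_pos n
    have h2 := L_pos (n+1)
    have hL := L_recur n
    rw [fibList_recur, hL,
      List.getD_append_right _ _ _ _ (by show L (n+1) ≤ L (n+1) + L n - 1; omega : (fibList (n+1)).length ≤ L (n+1) + L n - 1)]
    have : L (n+1) + L n - 1 - (fibList (n+1)).length = L n - 1 := by
      show L (n+1) + L n - 1 - L (n+1) = L n - 1
      omega
    rw [this, ih1]
    omega


def blockW (N : ℕ) (t : Bool) : List ℕ := if t then fibList N else fibList (N+1)

def Rb : Bool → Bool → Prop := fun a b => a = true → b = false

lemma blockW_true (N : ℕ) : blockW N true = fibList N := rfl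
lemma blockW_false (N : ℕ) : blockW N false = fibList (N+1) := rfl

lemma blocks_exist (N M : ℕ) : ∃ l : List Bool, l.head? = some false ∧ List.Chain' Rb l ∧
    fibList (N+1+M) = (l.map (blockW N)).flatten := by
  induction M using Nat.twoStepInduction with
  | zero =>
    exact ⟨[false], rfl, List.isChain_singleton _, by simp [blockW]⟩
  | one =>
    refine ⟨[false, true], rfl, ?_, ?_⟩
    · simp [List.Chain', List.isChain_cons_cons, Rb]
    · show fibList (N+2) = _
      simp [blockW, fibList_recur]
  | more M ihM ihM1 =>
    obtain ⟨l2, h2h, h2c, h2e⟩ := ihM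
    obtain ⟨l1, h1h, h1c, h1e⟩ := ihM1
    refine ⟨l1 ++ l2, ?_, ?_, ?_⟩
    · cases l1 with
      | nil => simp at h1h
      | cons a t => simpa using h1h
    · rw [List.Chain', List.isChain_append]
      refine ⟨h1c, h2c, fun x _ y hy => ?_⟩
      cases l2 with
      | nil => simp at h2h
      | cons b t =>
        simp at h2h hy
        intro _
        rw [← hy, h2h]
    · have : N+1+(M+2) = (N+1+M)+2 := by ring
      rw [this, fibList_recur]
      have : N+1+M+1 = N+1+(M+1) := by ring
      rw [this, h1e, h2e, List.map_append, List.flatten_append]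

lemma getD_at_offset2 (A B : List ℕ) (j : ℕ) :
    (A ++ B).getD (A.length + j) 0 = B.getD j 0 := by
  rw [List.getD_append_right _ _ _ _ (Nat.le_add_right _ _), Nat.add_sub_cancel_left]


lemma occ_front (N : ℕ) (A : List ℕ) (r : List Bool) {j : ℕ} (hj : j < L (N+1)) :
    (A ++ ((false :: r).map (blockW N)).flatten).getD (A.length + j) 0
      = (fibList (N+1)).getD j 0 := by
  rw [getD_at_offset2]
  have e : ((false :: r).map (blockW N)).flatten
      = fibList (N+1) ++ (r.map (blockW N)).flatten := by
    simp [blockW_false]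
  rw [e, List.getD_append _ _ _ _ hj]

lemma gap_list (N : ℕ) : ∀ l : List Bool, List.Chain' Rb l →
    ∀ m : ℕ, m + (2 * L (N+1) + L N) ≤ ((l.map (blockW N)).flatten).length →
    ∃ k, m ≤ k ∧ k + L (N+1) ≤ m + (2 * L (N+1) + L N) ∧
      ∀ j < L (N+1), ((l.map (blockW N)).flatten).getD (k+j) 0 = (fibList (N+1)).getD j 0 := by
  have hN := L_pos N
  have hN1 := L_pos (N+1)
  intro l
  induction l with
  | nil =>
    intro _ m hm
    have h0 : ((List.map (blockW N) ([]:List Bool)).flatten).length = 0 := rfl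
    omega
  | cons a rest ih =>
    intro hch m hm
    have hch' : List.Chain' Rb rest := hch.tail
    have hT : ((a :: rest).map (blockW N)).flatten
        = blockW N a ++ (rest.map (blockW N)).flatten := by simp
    rw [hT, List.length_append] at hm
    by_cases hcase : (blockW N a).length ≤ m
    · obtain ⟨k, hk1, hk2, hk3⟩ := ih hch' (m - (blockW N a).length) (by omega)
      refine ⟨k + (blockW N a).length, by omega, by omega, fun j hj => ?_⟩
      rw [hT, List.getD_append_right _ _ _ _ (by omega)]
      have e2 : k + (blockW N a).length + j - (blockW N a).length = k + j := by omega
      rw [e2]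
      exact hk3 j hj
    · push_neg at hcase
      cases rest with
      | nil =>
        exfalso
        have : (blockW N a).length ≤ L (N+1) := by
          cases a
          · exact le_refl _
          · exact (prefix_le (by omega)).length_le
        simp at hm
        omega
      | cons b r2 =>
        cases a with
        | true =>
          -- next block must be false
          have hb : b = false := (List.isChain_cons_cons.mp hch).1 rfl
          subst hb
          have hlen : (blockW N true).length = L N := rfl
          refine ⟨L N, by omega, by omega, fun j hj => ?_⟩
          have e : ((true :: false :: r2).map (blockW N)).flatten
              = fibList N ++ ((false :: r2).map (blockW N)).flatten := by
            simp [blockW_true]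
          rw [e]
          exact occ_front N (fibList N) r2 hj
        | false =>
          have hlen : (blockW N false).length = L (N+1) := rfl
          cases b with
          | false =>
            refine ⟨L (N+1), by omega, by omega, fun j hj => ?_⟩
            have e : ((false :: false :: r2).map (blockW N)).flatten
                = fibList (N+1) ++ ((false :: r2).map (blockW N)).flatten := by
              simp [blockW_false]
            rw [e]
            exact occ_front N (fibList (N+1)) r2 hj
          | true =>
            cases r2 with
            | nil =>
              exfalso
              have e1 : (blockW N false).length = L (N+1) := rfl
              have e2 : ((List.map (blockW N) [true]).flatten).length = L N := by
                simp [blockW_true]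
              omega
            | cons c r3 =>
              have hc : c = false := ((List.isChain_cons_cons.mp (List.isChain_cons_cons.mp hch).2).1) rfl
              subst hc
              have hA : (fibList (N+1) ++ fibList N).length = L (N+1) + L N := by simp
              refine ⟨(fibList (N+1) ++ fibList N).length, by omega, by omega, fun j hj => ?_⟩
              have e : ((false :: true :: false :: r3).map (blockW N)).flatten
                  = (fibList (N+1) ++ fibList N) ++ ((false :: r3).map (blockW N)).flatten := by
                simp [blockW_false, blockW_true]
              rw [e]
              exact occ_front N (fibList (N+1) ++ fibList N) r3 hj


lemma occFT (N : ℕ) {i : ℕ} (hi : i < L (N+1) + L N) :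
    (fibList (N+1) ++ fibList N).getD i 0 = (fibList (N+4)).getD i 0 := by
  have h : fibList (N+1) ++ fibList N <+: fibList (N+4) := by
    rw [← fibList_recur]; exact prefix_le (by omega)
  exact (getD_prefix h (by simpa using hi)).symm

lemma occTF (N : ℕ) {i : ℕ} (hi : i < L N + L (N+1)) :
    (fibList N ++ fibList (N+1)).getD i 0 = (fibList (N+4)).getD (L (N+1) + i) 0 := by
  have e3 : fibList (N+3) = fibList (N+1) ++ (fibList N ++ fibList (N+1)) := by
    rw [fibList_recur (N+1), fibList_recur N, List.append_assoc]
  have h1 : L (N+2) = L (N+1) + L N := L_recur N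
  have h2 : L (N+3) = L (N+2) + L (N+1) := L_recur (N+1)
  have hstep : (fibList (N+4)).getD (L (N+1) + i) 0 = (fibList (N+3)).getD (L (N+1) + i) 0 :=
    getD_prefix (prefix_succ (N+3)) (by show L (N+1) + i < L (N+3); omega)
  rw [hstep, e3]
  exact (getD_at_offset2 (fibList (N+1)) _ i).symm

lemma occFF (N : ℕ) {i : ℕ} (hi : i < L (N+1) + L (N+1)) :
    (fibList (N+1) ++ fibList (N+1)).getD i 0 = (fibList (N+4)).getD (L (N+2) + i) 0 := by
  have e4 : fibList (N+4)
      = (fibList (N+1) ++ fibList N) ++ ((fibList (N+1) ++ fibList (N+1)) ++ fibList N) := by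
    rw [fibList_recur (N+2), fibList_recur (N+1), fibList_recur N]
    simp [List.append_assoc]
  have hA : L (N+2) = (fibList (N+1) ++ fibList N).length := by
    show (fibList (N+2)).length = _
    rw [fibList_recur]
  rw [e4, hA, getD_at_offset2]
  exact (List.getD_append _ _ _ _ (by simpa using hi)).symm

lemma cover_list (N : ℕ) : ∀ l : List Bool, List.Chain' Rb l →
    ∀ p n : ℕ, n ≤ L N →
    p + n + (L (N+1) + L N) ≤ ((l.map (blockW N)).flatten).length →
    ∃ t, t + n ≤ L (N+4) ∧
      ∀ j < n, ((l.map (blockW N)).flatten).getD (p+j) 0 = (fibList (N+4)).getD (t+j) 0 := by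
  have hN := L_pos N
  have hN1 := L_pos (N+1)
  have hmono : (fibList N).length ≤ (fibList (N+1)).length := (prefix_succ N).length_le
  have hr1 : L (N+2) = L (N+1) + L N := L_recur N
  have hr2 : L (N+3) = L (N+2) + L (N+1) := L_recur (N+1)
  have hr3 : L (N+4) = L (N+3) + L (N+2) := L_recur (N+2)
  have eLN : (fibList N).length = L N := rfl
  have eLN1 : (fibList (N+1)).length = L (N+1) := rfl
  intro l
  induction l with
  | nil =>
    intro _ p n hn hlen
    exfalso
    have h0 : ((List.map (blockW N) ([]:List Bool)).flatten).length = 0 := rfl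
    omega
  | cons a rest ih =>
    intro hch p n hn hlen
    have hT : ((a :: rest).map (blockW N)).flatten
        = blockW N a ++ (rest.map (blockW N)).flatten := by simp
    rw [hT, List.length_append] at hlen
    by_cases hcase : (blockW N a).length ≤ p
    · obtain ⟨t, ht1, ht2⟩ := ih hch.tail (p - (blockW N a).length) n hn (by omega)
      refine ⟨t, ht1, fun j hj => ?_⟩
      rw [hT, List.getD_append_right _ _ _ _ (by omega)]
      have e2 : p + j - (blockW N a).length = p - (blockW N a).length + j := by omega
      rw [e2]
      exact ht2 j hj
    · push_neg at hcase
      cases rest with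
      | nil =>
        exfalso
        have hle : (blockW N a).length ≤ L (N+1) := by
          cases a
          · exact le_refl _
          · exact hmono
        have h0 : ((List.map (blockW N) ([]:List Bool)).flatten).length = 0 := rfl
        omega
      | cons b r2 =>
        have hbl : L N ≤ (blockW N b).length := by
          cases b
          · exact hmono
          · exact le_refl _
        have key : ∀ j < n, (((a :: b :: r2).map (blockW N)).flatten).getD (p+j) 0
            = (blockW N a ++ blockW N b).getD (p+j) 0 := by
          intro j hj
          have e : ((a :: b :: r2).map (blockW N)).flatten
              = (blockW N a ++ blockW N b) ++ (r2.map (blockW N)).flatten := by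
            simp
          rw [e, List.getD_append _ _ _ _ (by rw [List.length_append]; omega)]
        cases a with
        | false =>
          have ha : (blockW N false).length = L (N+1) := rfl
          cases b with
          | true =>
            have hb : (blockW N true).length = L N := rfl
            refine ⟨p, by omega, fun j hj => ?_⟩
            rw [key j hj]
            exact occFT N (by omega)
          | false =>
            refine ⟨L (N+2) + p, by omega, fun j hj => ?_⟩
            rw [key j hj]
            have := occFF N (i := p + j) (by omega)
            have e3 : L (N+2) + p + j = L (N+2) + (p + j) := by omega
            rw [e3]
            exact this
        | true =>
          have hb : b = false := (List.isChain_cons_cons.mp hch).1 rfl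
          subst hb
          have ha : (blockW N true).length = L N := rfl
          refine ⟨L (N+1) + p, by omega, fun j hj => ?_⟩
          rw [key j hj]
          have := occTF N (i := p + j) (by omega)
          have e3 : L (N+1) + p + j = L (N+1) + (p + j) := by omega
          rw [e3]
          exact this


lemma gap_F (N m : ℕ) : ∃ k, m ≤ k ∧ k + L (N+1) ≤ m + (2 * L (N+1) + L N) ∧
    ∀ j < L (N+1), fibWord (k + j) = (fibList (N+1)).getD j 0 := by
  obtain ⟨l, _, hc, he⟩ := blocks_exist N (m + (2 * L (N+1) + L N))
  have hM := L_ge (N+1+(m + (2 * L (N+1) + L N)))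
  have hlen : m + (2 * L (N+1) + L N) ≤ ((l.map (blockW N)).flatten).length := by
    rw [← he]
    show _ ≤ L (N+1+(m + (2 * L (N+1) + L N)))
    omega
  obtain ⟨k, h1, h2, h3⟩ := gap_list N l hc m hlen
  refine ⟨k, h1, h2, fun j hj => ?_⟩
  have hidx : k + j < L (N+1+(m + (2 * L (N+1) + L N))) := by omega
  rw [fibWord_eq hidx, he]
  exact h3 j hj

lemma cover_F (N p n : ℕ) (hn : n ≤ L N) :
    ∃ t, t + n ≤ L (N+4) ∧ ∀ j < n, fibWord (p + j) = (fibList (N+4)).getD (t + j) 0 := by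
  obtain ⟨l, _, hc, he⟩ := blocks_exist N (p + n + (L (N+1) + L N))
  have hM := L_ge (N+1+(p + n + (L (N+1) + L N)))
  have hlen : p + n + (L (N+1) + L N) ≤ ((l.map (blockW N)).flatten).length := by
    rw [← he]
    show _ ≤ L (N+1+(p + n + (L (N+1) + L N)))
    omega
  obtain ⟨t, h1, h2⟩ := cover_list N l hc p n hn hlen
  refine ⟨t, h1, fun j hj => ?_⟩
  have hN1 := L_pos (N+1)
  have hidx : p + j < L (N+1+(p + n + (L (N+1) + L N))) := by omega
  rw [fibWord_eq hidx, he]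
  exact h2 j hj

lemma prefix_occ (N c : ℕ) (hc : c < 2) :
    ∃ t0, t0 + 1 + L N ≤ L (N+4) ∧ (fibList (N+4)).getD t0 0 = c ∧
      ∀ j < L N, (fibList (N+4)).getD (t0 + 1 + j) 0 = (fibList N).getD j 0 := by
  have hN := L_pos N
  have hN1 := L_pos (N+1)
  have hN2 := L_pos (N+2)
  have hr1 : L (N+2) = L (N+1) + L N := L_recur N
  have hr2 : L (N+3) = L (N+2) + L (N+1) := L_recur (N+1)
  have hr3 : L (N+4) = L (N+3) + L (N+2) := L_recur (N+2)
  have hm1 : L N ≤ L (N+1) := (prefix_succ N).length_le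
  have hm2 : L (N+1) ≤ L (N+2) := (prefix_succ (N+1)).length_le
  have hcc : c = (N+1) % 2 ∨ c = N % 2 := by omega
  rcases hcc with hcc | hcc
  · refine ⟨L (N+1) - 1, by omega, ?_, fun j hj => ?_⟩
    · have h1 : (fibList (N+4)).getD (L (N+1) - 1) 0 = (fibList (N+1)).getD (L (N+1) - 1) 0 :=
        getD_prefix (prefix_le (by omega)) (by show _ < L (N+1); omega)
      rw [h1, lastLetter, hcc]
    · have e1 : L (N+1) - 1 + 1 + j = L (N+1) + j := by omega
      rw [e1]
      have h1 : (fibList (N+4)).getD (L (N+1) + j) 0 = (fibList (N+3)).getD (L (N+1) + j) 0 :=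
        getD_prefix (prefix_succ (N+3)) (by show _ < L (N+3); omega)
      have e3 : fibList (N+3) = fibList (N+1) ++ (fibList N ++ fibList (N+1)) := by
        rw [fibList_recur (N+1), fibList_recur N, List.append_assoc]
      rw [h1, e3, getD_at_offset2, List.getD_append _ _ _ _ hj]
  · refine ⟨L (N+2) - 1, by omega, ?_, fun j hj => ?_⟩
    · have h1 : (fibList (N+4)).getD (L (N+2) - 1) 0 = (fibList (N+2)).getD (L (N+2) - 1) 0 :=
        getD_prefix (prefix_le (by omega)) (by show _ < L (N+2); omega)
      rw [h1, lastLetter, hcc]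
      omega
    · have e1 : L (N+2) - 1 + 1 + j = L (N+2) + j := by omega
      rw [e1]
      have h1 : (fibList (N+4)).getD (L (N+2) + j) 0 = (fibList (N+3)).getD (L (N+2) + j) 0 :=
        getD_prefix (prefix_succ (N+3)) (by show _ < L (N+3); omega)
      rw [h1, fibList_recur (N+1), getD_at_offset2]
      exact getD_prefix (prefix_succ N) hj

theorem row_UR (c : ℕ) (hc : c < 2) :
    UniformlyRecurrent (fun k => if k = 0 then c else fibWord (k-1)) := by
  intro n
  have hnL : n ≤ L n := by have := L_ge n; omega
  refine ⟨2 * L (n+4) + L (n+3) + 1, fun p m => ?_⟩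
  have hrep : ∃ t, t + n ≤ L (n+4) ∧ ∀ j < n,
      (if p + j = 0 then c else fibWord (p+j-1)) = (fibList (n+4)).getD (t+j) 0 := by
    cases p with
    | zero =>
      obtain ⟨t0, hb, h0, hs⟩ := prefix_occ n c hc
      refine ⟨t0, by omega, fun j hj => ?_⟩
      cases j with
      | zero => simpa using h0.symm
      | succ h =>
        have hh : h < L n := by omega
        have e0 : (0:ℕ) + (h+1) = h + 1 := by omega
        rw [e0, if_neg (Nat.succ_ne_zero h)]
        have e1 : h + 1 - 1 = h := rfl
        have e2 : t0 + (h + 1) = t0 + 1 + h := by omega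
        rw [e1, e2, hs h hh]
        exact fibWord_eq hh
    | succ q =>
      obtain ⟨t, hb, hcov⟩ := cover_F n q n hnL
      refine ⟨t, hb, fun j hj => ?_⟩
      rw [if_neg (by omega : ¬ (q + 1 + j = 0))]
      have e1 : q + 1 + j - 1 = q + j := by omega
      rw [e1]
      exact hcov j hj
  obtain ⟨t, htb, hfac⟩ := hrep
  obtain ⟨k, hk1, hk2, hk3⟩ := gap_F (n+3) m
  have eL : L (n+3+1) = L (n+4) := rfl
  refine ⟨k + 1 + t, by omega, by omega, fun j hj => ?_⟩
  show (if k + 1 + t + j = 0 then c else fibWord (k+1+t+j-1)) = _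
  rw [if_neg (by omega : ¬ (k + 1 + t + j = 0))]
  have e1 : k + 1 + t + j - 1 = k + (t + j) := by omega
  rw [e1]
  have h2 : fibWord (k + (t + j)) = (fibList (n+4)).getD (t+j) 0 := hk3 (t+j) (by omega)
  rw [h2]
  exact (hfac j hj).symm

end Aux12

theorem stmt_12 :
    (∀ n : ℕ, UniformlyRecurrent (fun k => W12 k n)) ∧
    (∀ m : ℕ, UniformlyRecurrent (fun k => W12 m k)) ∧
    ¬ IsUR (fun v : Fin 2 → ℕ => W12 (v 0) (v 1)) := by
  refine ⟨?_, ?_, ?_⟩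
  · intro n
    have he : (fun k => W12 k n) = (fun k => if k = 0 then n % 2 else fibWord (k-1)) := rfl
    rw [he]
    exact Aux12.row_UR (n % 2) (Nat.mod_lt _ (by omega))
  · intro m
    cases m with
    | zero =>
      intro n
      refine ⟨n + 2, fun p m' => ?_⟩
      by_cases h : p % 2 = m' % 2
      · refine ⟨m', le_refl _, by omega, fun j hj => ?_⟩
        show (m' + j) % 2 = (p + j) % 2
        omega
      · refine ⟨m' + 1, by omega, by omega, fun j hj => ?_⟩
        show (m' + 1 + j) % 2 = (p + j) % 2
        omega
    | succ q =>
      intro n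
      refine ⟨n, fun p m' => ⟨m', le_refl _, le_refl _, fun j hj => ?_⟩⟩
      show W12 (q+1) (m' + j) = W12 (q+1) (p + j)
      simp [W12]
  · intro hUR
    obtain ⟨b, hb⟩ := hUR (fun _ => 2)
    obtain ⟨r, hr, hfac⟩ := hb (fun _ => 1)
    have hr0 : 1 ≤ r 0 := (hr 0).1
    have hW : ∀ x, W12 (r 0) x = fibWord (r 0 - 1) := by
      intro x
      show (if r 0 = 0 then x % 2 else fibWord (r 0 - 1)) = fibWord (r 0 - 1)
      rw [if_neg (show ¬ r 0 = 0 by omega)]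
    have h1 := hfac ![0,0] (by decide)
    have h2 := hfac ![0,1] (by decide)
    simp only [Matrix.cons_val_zero, Matrix.cons_val_one, Matrix.head_cons, add_zero] at h1 h2
    rw [hW (r 1)] at h1
    rw [hW (r 1 + 1)] at h2
    have eA : W12 0 0 = 0 := rfl
    have eB : W12 0 1 = 1 := rfl
    rw [eA] at h1
    rw [eB] at h2
    omega
end

section
/- Let w be the fixed point of a d-dimensional square morphism φ of size s, prolongable on the letter a, and let q ∈ ℕ^d be a direction. If there exists b ∈ ℕ such that the letter a = w(0) occurs along direction q with gaps at most b (i.e., every b consecutive positions ℓq, (ℓ+1)q, …, (ℓ+b−1)q contain a position where w equals a), then for every m ∈ ℕ^d, the prefix of w of size m occurs along q (i.e., at positions of the form ℓq) with gaps at most s^{⌈log_s(max m)⌉} · b. -/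
theorem stmt_13_aux {d : ℕ} {A : Type*} (s : ℕ) (hs : 2 ≤ s)
    (φ : A → (Fin d → Fin s) → A) (a : A)
    (w : (Fin d → ℕ) → A)
    (hw0 : w (fun _ => 0) = a)
    (hfix : ∀ (i : Fin d → ℕ) (r : Fin d → Fin s),
      w (fun j => s * i j + (r j : ℕ)) = φ (w i) r) :
    ∀ (n : ℕ) (p : Fin d → ℕ), w p = a →
      ∀ i : Fin d → ℕ, (∀ j, i j < s ^ n) →
        w (fun j => s ^ n * p j + i j) = w i := by
  intro n
  induction n with
  | zero =>
    intro p hp i hi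
    have hi0 : i = fun _ => 0 := funext fun j => by
      have := hi j; simpa using Nat.lt_one_iff.mp (by simpa using this)
    subst hi0
    simp only [pow_zero, one_mul, add_zero]
    rw [hp, hw0]
  | succ n ih =>
    intro p hp i hi
    have hspos : 0 < s := by omega
    set i' : Fin d → ℕ := fun j => i j / s with hi'
    set r : Fin d → Fin s := fun j => ⟨i j % s, Nat.mod_lt _ hspos⟩ with hr
    have hi'lt : ∀ j, i' j < s ^ n := by
      intro j
      rw [hi', Nat.div_lt_iff_lt_mul hspos]
      have := hi j
      rwa [pow_succ] at this
    have key1 : (fun j => s ^ (n+1) * p j + i j)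
        = fun j => s * ((s ^ n * p j + i' j)) + (r j : ℕ) := by
      funext j
      have := Nat.div_add_mod (i j) s
      simp only [hi', hr, pow_succ]
      ring_nf
      omega
    have key2 : (fun j => i j) = fun j => s * i' j + (r j : ℕ) := by
      funext j
      have := Nat.div_add_mod (i j) s
      simp only [hi', hr]
      omega
    calc w (fun j => s ^ (n+1) * p j + i j)
        = w (fun j => s * ((s ^ n * p j + i' j)) + (r j : ℕ)) := by rw [key1]
      _ = φ (w (fun j => s ^ n * p j + i' j)) r := hfix _ r
      _ = φ (w i') r := by rw [ih p hp i' hi'lt]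
      _ = w (fun j => s * i' j + (r j : ℕ)) := (hfix i' r).symm
      _ = w i := by rw [← key2]

theorem stmt_13 {d : ℕ} {A : Type*} (s : ℕ) (hs : 2 ≤ s)
    (φ : A → (Fin d → Fin s) → A) (a : A)
    (hprol : φ a (fun _ => ⟨0, by omega⟩) = a)
    (w : (Fin d → ℕ) → A)
    (hw0 : w (fun _ => 0) = a)
    (hfix : ∀ (i : Fin d → ℕ) (r : Fin d → Fin s),
      w (fun j => s * i j + (r j : ℕ)) = φ (w i) r)
    (q : Fin d → ℕ) (hq : Finset.univ.gcd q = 1)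
    (b : ℕ)
    (hb : ∀ ℓ : ℕ, ∃ k : ℕ, ℓ ≤ k ∧ k < ℓ + b ∧ w (fun j => k * q j) = a) :
    ∀ m : Fin d → ℕ, ∀ ℓ : ℕ, ∃ k : ℕ, ℓ ≤ k ∧
      k < ℓ + s ^ (Nat.clog s (Finset.univ.sup m)) * b ∧
      ∀ i : Fin d → ℕ, (∀ j, i j < m j) → w (fun j => i j + k * q j) = w i := by
  intro m ℓ
  obtain ⟨S, hSdef⟩ : ∃ S, S = s ^ Nat.clog s (Finset.univ.sup m) := ⟨_, rfl⟩
  rw [← hSdef]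
  have hSpos : 0 < S := by
    rw [hSdef]; exact pow_pos (by omega) _
  have hb1 : 1 ≤ b := by
    obtain ⟨k, hk1, hk2, _⟩ := hb 0
    omega
  obtain ⟨ℓ', hℓ'⟩ : ∃ x, x = (ℓ + S - 1) / S := ⟨_, rfl⟩
  have hdm := Nat.div_add_mod (ℓ + S - 1) S
  rw [← hℓ'] at hdm
  have hmod : (ℓ + S - 1) % S < S := Nat.mod_lt _ hSpos
  have h1 : ℓ ≤ S * ℓ' := by omega
  have h2 : S * ℓ' ≤ ℓ + S - 1 := by omega
  obtain ⟨k', hk1, hk2, hka⟩ := hb ℓ'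
  have h3 : S * k' + S ≤ S * ℓ' + S * b := by
    have := Nat.mul_le_mul_left S (show k' + 1 ≤ ℓ' + b by omega)
    rwa [mul_add, mul_add, mul_one] at this
  have h4 : S * ℓ' ≤ S * k' := Nat.mul_le_mul_left S hk1
  refine ⟨S * k', by omega, by omega, ?_⟩
  intro i hi
  have hilt : ∀ j, i j < S := by
    intro j
    have hm : m j ≤ Finset.univ.sup m := Finset.le_sup (Finset.mem_univ j)
    have hpow : Finset.univ.sup m ≤ S := by
      rw [hSdef]; exact Nat.le_pow_clog (by omega) _
    exact lt_of_lt_of_le (hi j) (le_trans hm hpow)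
  have key := stmt_13_aux s hs φ a w hw0 hfix (Nat.clog s (Finset.univ.sup m))
    (fun j => k' * q j) hka i (by rw [← hSdef]; exact hilt)
  have heq : (fun j => i j + S * k' * q j)
      = (fun j => s ^ Nat.clog s (Finset.univ.sup m) * (k' * q j) + i j) := by
    funext j; rw [hSdef]; ring
  rw [heq]
  exact key
end

section
/- Let φ be a d-dimensional square morphism of prime size s prolongable on a ∈ A, let q be a direction, and let C be the cyclic subgroup of (ℤ/sℤ)^d generated by q mod s. Suppose φ(b)(i) ≠ a for every letter b ∈ A and every i ∈ C, except that φ(a)(0) = a. Then the sequence ℓ ↦ φ^ω(a)(ℓq) satisfies: it equals a at ℓ = 0 and differs from a for all ℓ ≥ 1. In particular φ^ω(a) is not recurrent along direction q. -/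
/-!
Write `ℓ q = s ⌊ℓ q / s⌋ + (ℓ q mod s)` coordinatewise, so that `w (ℓ q)` is the letter of
`φ (w ⌊ℓ q / s⌋)` at the digit vector `ℓ q mod s`, which lies in the cyclic group generated by
`q mod s`. By hypothesis this letter can only be `a` when `w ⌊ℓ q / s⌋ = a` and the digit vector
vanishes. Since `q` is primitive, the latter forces `s ∣ ℓ`, so `⌊ℓ q / s⌋ = (ℓ / s) q` with
`0 < ℓ / s < ℓ`, and strong induction on `ℓ` rules this out.
-/

theorem Finset.dvd_of_forall_dvd_mul_of_gcd_eq_one {ι : Type*} {t : Finset ι} {f : ι → ℕ}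
    (hf : t.gcd f = 1) {n ℓ : ℕ} (h : ∀ j ∈ t, n ∣ ℓ * f j) : n ∣ ℓ := by
  have hdvd : n ∣ t.gcd (fun j => ℓ * f j) := Finset.dvd_gcd h
  rwa [Finset.gcd_mul_left, hf, normalize_eq, mul_one] at hdvd

section FixedPoint

variable {d s : ℕ} {A : Type*} {φ : A → (Fin d → Fin s) → A} {w : (Fin d → ℕ) → A}

theorem fixedPoint_eq_morphism_div_mod (hs : 0 < s)
    (hfix : ∀ (i : Fin d → ℕ) (r : Fin d → Fin s), w (fun j => s * i j + (r j : ℕ)) = φ (w i) r)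
    (v : Fin d → ℕ) :
    w v = φ (w fun j => v j / s) (fun j => ⟨v j % s, Nat.mod_lt _ hs⟩) := by
  rw [← hfix]
  simp only [Nat.div_add_mod]

theorem fixedPoint_mul_ne_of_morphism_ne {a : A} (hs : 1 < s)
    (hfix : ∀ (i : Fin d → ℕ) (r : Fin d → Fin s), w (fun j => s * i j + (r j : ℕ)) = φ (w i) r)
    {q : Fin d → ℕ} (hq : Finset.univ.gcd q = 1)
    (hC : ∀ (b : A) (r : Fin d → Fin s),
      (∃ k : ZMod s, ∀ j, ((r j : ℕ) : ZMod s) = k * ((q j : ℕ) : ZMod s)) →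
      ¬ (b = a ∧ ∀ j, (r j : ℕ) = 0) → φ b r ≠ a) :
    ∀ ℓ : ℕ, 0 < ℓ → w (fun j => ℓ * q j) ≠ a := by
  intro ℓ
  induction ℓ using Nat.strong_induction_on with
  | _ ℓ ih =>
    intro hℓ
    rw [fixedPoint_eq_morphism_div_mod (by omega) hfix]
    refine hC _ _ ⟨ℓ, fun j => by push_cast [ZMod.natCast_mod]; rfl⟩ ?_
    rintro ⟨hprev, hdigits⟩
    obtain ⟨m, rfl⟩ : s ∣ ℓ := Finset.dvd_of_forall_dvd_mul_of_gcd_eq_one hq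
      fun j _ => Nat.dvd_of_mod_eq_zero (hdigits j)
    have hm : 0 < m := Nat.pos_of_mul_pos_left hℓ
    refine ih m (lt_mul_left hm hs) hm ?_
    simpa only [mul_assoc, Nat.mul_div_cancel_left _ (by omega : 0 < s)] using hprev

end FixedPoint

theorem stmt_15_general {d : ℕ} {A : Type*} (s : ℕ) (hs : s.Prime)
    (φ : A → (Fin d → Fin s) → A) (a : A)
    (w : (Fin d → ℕ) → A)
    (hw0 : w (fun _ => 0) = a)
    (hfix : ∀ (i : Fin d → ℕ) (r : Fin d → Fin s),
      w (fun j => s * i j + (r j : ℕ)) = φ (w i) r)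
    (q : Fin d → ℕ) (hq : Finset.univ.gcd q = 1)
    -- `φ(b)(i) ≠ a` for all `b ∈ A` and `i` in the cyclic subgroup generated by `q mod s`,
    -- except for `φ(a)(0) = a`.
    (hC : ∀ (b : A) (r : Fin d → Fin s),
      (∃ k : ZMod s, ∀ j, ((r j : ℕ) : ZMod s) = k * ((q j : ℕ) : ZMod s)) →
      ¬ (b = a ∧ ∀ j, (r j : ℕ) = 0) → φ b r ≠ a) :
    w (fun j => 0 * q j) = a ∧
      ∀ ℓ : ℕ, 1 ≤ ℓ → w (fun j => ℓ * q j) ≠ a :=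
  ⟨by simpa only [zero_mul] using hw0, fixedPoint_mul_ne_of_morphism_ne hs.one_lt hfix hq hC⟩

theorem stmt_15 {d : ℕ} {A : Type*} (s : ℕ) (hs : s.Prime)
    (φ : A → (Fin d → Fin s) → A) (a : A)
    (hprol : φ a (fun _ => ⟨0, hs.pos⟩) = a)
    (w : (Fin d → ℕ) → A)
    (hw0 : w (fun _ => 0) = a)
    (hfix : ∀ (i : Fin d → ℕ) (r : Fin d → Fin s),
      w (fun j => s * i j + (r j : ℕ)) = φ (w i) r)
    (q : Fin d → ℕ) (hq : Finset.univ.gcd q = 1)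
    -- `φ(b)(i) ≠ a` for all `b ∈ A` and `i` in the cyclic subgroup generated by `q mod s`,
    -- except for `φ(a)(0) = a`.
    (hC : ∀ (b : A) (r : Fin d → Fin s),
      (∃ k : ZMod s, ∀ j, ((r j : ℕ) : ZMod s) = k * ((q j : ℕ) : ZMod s)) →
      ¬ (b = a ∧ ∀ j, (r j : ℕ) = 0) → φ b r ≠ a) :
    w (fun j => 0 * q j) = a ∧
      ∀ ℓ : ℕ, 1 ≤ ℓ → w (fun j => ℓ * q j) ≠ a :=
  stmt_15_general s hs φ a w hw0 hfix q hq hC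
end

section
/- Let φ be a unidimensional morphism of constant prime length s prolongable on a ∈ A such that there exists i ∈ {0,…,s−1} with φ(b)_i = a for every b ∈ A. Then for every positive integer m, any s consecutive terms of the sequence k ↦ φ^ω(a)_{mk} contain the letter a. -/
/-!
Write `m = s ^ e * m'` with `s ∤ m'`. Since `s` is prime, `m'` is invertible modulo `s`, so among
any `s` consecutive integers `k + j` one has `m' * (k + j) ≡ i [MOD s]`, and then
`w (m' * (k + j)) = φ (w _) i = a`. Because `φ a` starts with `a`, the positions `s ^ e * t`
with `w t = a` again carry the letter `a`, which handles the factor `s ^ e`.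
-/

theorem Nat.exists_lt_mul_add_mod_eq {s c : ℕ} (hs : 0 < s) (hc : c.Coprime s) (k r : ℕ) :
    ∃ j < s, c * (k + j) % s = r % s := by
  have : NeZero s := ⟨hs.ne'⟩
  set u : ZMod s := (c : ZMod s)⁻¹ * r - k
  refine ⟨u.val, u.val_lt, (ZMod.natCast_eq_natCast_iff' _ _ _).mp ?_⟩
  have hk : (k : ZMod s) + u = (c : ZMod s)⁻¹ * r := by ring
  push_cast
  rw [ZMod.natCast_zmod_val, hk, ← mul_assoc, ZMod.coe_mul_inv_eq_one c hc, one_mul]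

section FixedPoint

variable {A : Type*} {s : ℕ} {φ : A → Fin s → A} {w : ℕ → A} {a : A}

theorem eq_of_mod_eq_of_forall_apply_eq
    (hfix : ∀ (n : ℕ) (r : Fin s), w (s * n + (r : ℕ)) = φ (w n) r)
    {i : Fin s} (hi : ∀ b : A, φ b i = a) {n : ℕ} (hn : n % s = i) : w n = a := by
  rw [← Nat.div_add_mod n s, hn, hfix, hi]

theorem pow_mul_eq_of_eq (hfix : ∀ (n : ℕ) (r : Fin s), w (s * n + (r : ℕ)) = φ (w n) r)
    (hs : 0 < s) (hprol : φ a ⟨0, hs⟩ = a) {t : ℕ} (ht : w t = a) (e : ℕ) :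
    w (s ^ e * t) = a := by
  induction e with
  | zero => simpa using ht
  | succ e ih => simpa [pow_succ', mul_assoc, ih, hprol] using hfix (s ^ e * t) ⟨0, hs⟩

end FixedPoint

theorem stmt_16_general {A : Type*} (s : ℕ) (hs : s.Prime)
    (φ : A → Fin s → A) (a : A)
    (hprol : φ a ⟨0, hs.pos⟩ = a)
    (w : ℕ → A)
    (hfix : ∀ (n : ℕ) (r : Fin s), w (s * n + (r : ℕ)) = φ (w n) r)
    (i : Fin s) (hi : ∀ b : A, φ b i = a)
    (m : ℕ) (hm : 1 ≤ m) :
    ∀ k : ℕ, ∃ j : ℕ, j < s ∧ w (m * (k + j)) = a := by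
  intro k
  obtain ⟨e, m', hm', rfl⟩ := Nat.exists_eq_pow_mul_and_not_dvd (Nat.one_le_iff_ne_zero.mp hm) s hs.ne_one
  have hcop : m'.Coprime s := Nat.coprime_comm.mp ((hs.coprime_iff_not_dvd).mpr hm')
  obtain ⟨j, hj, hmod⟩ := Nat.exists_lt_mul_add_mod_eq hs.pos hcop k i
  refine ⟨j, hj, ?_⟩
  rw [mul_assoc]
  exact pow_mul_eq_of_eq hfix hs.pos hprol
    (eq_of_mod_eq_of_forall_apply_eq hfix hi (hmod.trans (Nat.mod_eq_of_lt i.isLt))) e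

theorem stmt_16 {A : Type*} (s : ℕ) (hs : s.Prime)
    (φ : A → Fin s → A) (a : A)
    (hprol : φ a ⟨0, hs.pos⟩ = a)
    (w : ℕ → A) (hw0 : w 0 = a)
    (hfix : ∀ (n : ℕ) (r : Fin s), w (s * n + (r : ℕ)) = φ (w n) r)
    (i : Fin s) (hi : ∀ b : A, φ b i = a)
    (m : ℕ) (hm : 1 ≤ m) :
    ∀ k : ℕ, ∃ j : ℕ, j < s ∧ w (m * (k + j)) = a :=
  stmt_16_general s hs φ a hprol w hfix i hi m hm
end

section
/- Let w = φ^ω(1) be the fixed point of the bidimensional binary square morphism of size 2 with φ(0) = [[1,*],[0,1]] and φ(1) = [[0,1],[1,1]] (precisely: φ(0)_{0,0}=0, φ(0)_{1,0}=1, φ(0)_{0,1}=1; φ(1)_{0,0}=1, φ(1)_{1,0}=1, φ(1)_{0,1}=0, φ(1)_{1,1}=1; Case 3.2 of the paper). Then the sequence ℓ ↦ w(2ℓ, ℓ) equals 1 at ℓ = 0 and equals 0 for all ℓ ≥ 1; in particular w is not recurrent along the direction (2,1). -/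
/-!
Halving the index along the lines `(2m+1, m)` and `(2ℓ, ℓ)`: `(4k+1, 2k)` is cell `(1,0)` of some
block, always `1`; `(4k+3, 2k+1)` is cell `(1,1)` of `φ (w (2k+1) k) = φ 1`, again `1`. Hence
`(4k+2, 2k+1)` is cell `(0,1)` of `φ 1`, i.e. `0`, and `(4k, 2k)` is cell `(0,0)` of
`φ (w (2k) k) = φ 0`, i.e. `0` by induction.
-/

section FixedPoint

variable {φ : Fin 2 → Fin 2 → Fin 2 → Fin 2} {w : ℕ → ℕ → Fin 2}

theorem fixedPoint_two_mul_add_one_self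
    (hfix : ∀ (x y : ℕ) (i j : Fin 2), w (2 * x + (i : ℕ)) (2 * y + (j : ℕ)) = φ (w x y) i j)
    (h10 : ∀ a, φ a 1 0 = 1) (h111 : φ 1 1 1 = 1) (m : ℕ) :
    w (2 * m + 1) m = 1 := by
  induction m using Nat.strong_induction_on with
  | _ m ih =>
    obtain ⟨k, rfl | rfl⟩ := Nat.even_or_odd' m
    · simpa [mul_left_comm] using (hfix (2 * k) k 1 0).trans (h10 _)
    · have hk : w (2 * k + 1) k = 1 := ih k (by omega)
      have h := hfix (2 * k + 1) k 1 1
      rw [hk, h111] at h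
      simpa [mul_add, mul_left_comm] using h

theorem fixedPoint_two_mul_self
    (hfix : ∀ (x y : ℕ) (i j : Fin 2), w (2 * x + (i : ℕ)) (2 * y + (j : ℕ)) = φ (w x y) i j)
    (h10 : ∀ a, φ a 1 0 = 1) (h000 : φ 0 0 0 = 0) (h101 : φ 1 0 1 = 0) (h111 : φ 1 1 1 = 1)
    {ℓ : ℕ} (hℓ : 1 ≤ ℓ) :
    w (2 * ℓ) ℓ = 0 := by
  induction ℓ using Nat.strong_induction_on with
  | _ ℓ ih =>
    obtain ⟨k, rfl | rfl⟩ := Nat.even_or_odd' ℓ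
    · have hk : w (2 * k) k = 0 := ih k (by omega) (by omega)
      have h := hfix (2 * k) k 0 0
      rw [hk, h000] at h
      simpa using h
    · have h := hfix (2 * k + 1) k 0 1
      rw [fixedPoint_two_mul_add_one_self hfix h10 h111, h101] at h
      simpa using h

end FixedPoint

theorem stmt_19_general (φ : Fin 2 → Fin 2 → Fin 2 → Fin 2)
    (h000 : φ 0 0 0 = 0) (h010 : φ 0 1 0 = 1)
    (h110 : φ 1 1 0 = 1) (h101 : φ 1 0 1 = 0) (h111 : φ 1 1 1 = 1)
    (w : ℕ → ℕ → Fin 2) (hw0 : w 0 0 = 1)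
    (hfix : ∀ (x y : ℕ) (i j : Fin 2),
      w (2 * x + (i : ℕ)) (2 * y + (j : ℕ)) = φ (w x y) i j) :
    w 0 0 = 1 ∧ ∀ ℓ : ℕ, 1 ≤ ℓ → w (2 * ℓ) ℓ = 0 := by
  have h10 : ∀ a, φ a 1 0 = 1 := Fin.forall_fin_two.2 ⟨h010, h110⟩
  exact ⟨hw0, fun _ hℓ => fixedPoint_two_mul_self hfix h10 h000 h101 h111 hℓ⟩

theorem stmt_19 (φ : Fin 2 → Fin 2 → Fin 2 → Fin 2)
    (h000 : φ 0 0 0 = 0) (h010 : φ 0 1 0 = 1) (h001 : φ 0 0 1 = 1)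
    (h100 : φ 1 0 0 = 1) (h110 : φ 1 1 0 = 1) (h101 : φ 1 0 1 = 0) (h111 : φ 1 1 1 = 1)
    (w : ℕ → ℕ → Fin 2) (hw0 : w 0 0 = 1)
    (hfix : ∀ (x y : ℕ) (i j : Fin 2),
      w (2 * x + (i : ℕ)) (2 * y + (j : ℕ)) = φ (w x y) i j) :
    w 0 0 = 1 ∧ ∀ ℓ : ℕ, 1 ≤ ℓ → w (2 * ℓ) ℓ = 0 :=
  stmt_19_general φ h000 h010 h110 h101 h111 w hw0 hfix
end
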